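/- The projective lines L₁ = { (a : -a : b : -b) : (a:b) ∈ ℙ¹ } and L₂ = { (0 : a : b : -a) : (a:b) ∈ ℙ¹ } in ℙ³ are disjoint (skew) and both are contained in the Clebsch cubic surface defined by Σ_{i≠j} xᵢ²xⱼ + 2 Σ_{i<j<l} xᵢxⱼx_l = 0. -/
import Mathlib


/-- The Clebsch cubic form `Σ_{i≠j} xᵢ²xⱼ + 2 Σ_{i<j<l} xᵢxⱼx_l`. -/
def clebschForm {k : Type*} [Field k] (v : Fin 4 → k) : k :=
  (∑ i, ∑ j, if i ≠ j then v i ^ 2 * v j else 0) +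
    2 * ∑ i, ∑ j, ∑ l, if i < j ∧ j < l then v i * v j * v l else 0

lemma clebschForm_eq {k : Type*} [Field k] (v : Fin 4 → k) :
    clebschForm v =
      v 0 ^ 2 * v 1 + v 0 ^ 2 * v 2 + v 0 ^ 2 * v 3 +
      v 1 ^ 2 * v 0 + v 1 ^ 2 * v 2 + v 1 ^ 2 * v 3 +
      v 2 ^ 2 * v 0 + v 2 ^ 2 * v 1 + v 2 ^ 2 * v 3 +
      v 3 ^ 2 * v 0 + v 3 ^ 2 * v 1 + v 3 ^ 2 * v 2 +
      2 * (v 0 * v 1 * v 2 + v 0 * v 1 * v 3 + v 0 * v 2 * v 3 + v 1 * v 2 * v 3) := by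
  simp only [clebschForm, Fin.sum_univ_four]
  simp (config := { decide := true }) only [reduceIte]
  ring

lemma clebschForm_smul {k : Type*} [Field k] (c : k) (v : Fin 4 → k) :
    clebschForm (c • v) = c ^ 3 * clebschForm v := by
  simp only [clebschForm_eq, Pi.smul_apply, smul_eq_mul]
  ring

lemma clebschForm_zero_of_mk {k : Type*} [Field k] (v : Fin 4 → k) (h : v ≠ 0)
    (hv : clebschForm v = 0) (p : Projectivization k (Fin 4 → k))
    (hp : p = Projectivization.mk k v h) : clebschForm p.rep = 0 := by
  have : Projectivization.mk k p.rep p.rep_nonzero = Projectivization.mk k v h := by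
    rw [Projectivization.mk_rep, hp]
  rw [Projectivization.mk_eq_mk_iff] at this
  obtain ⟨a, ha⟩ := this
  rw [← ha]
  have : (a : k) • v = (a : kˣ) • v := rfl
  rw [show ((a : kˣ) • v : Fin 4 → k) = (a : k) • v from rfl, clebschForm_smul, hv, mul_zero]

theorem stmt9 (k : Type*) [Field k] [CharZero k]
    (L₁ L₂ Clebsch : Set (Projectivization k (Fin 4 → k)))
    (hL₁ : L₁ = {p | ∃ (a b : k) (h : (![a, -a, b, -b] : Fin 4 → k) ≠ 0),
      p = Projectivization.mk k ![a, -a, b, -b] h})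
    (hL₂ : L₂ = {p | ∃ (a b : k) (h : (![0, a, b, -a] : Fin 4 → k) ≠ 0),
      p = Projectivization.mk k ![0, a, b, -a] h})
    (hC : Clebsch = {p | clebschForm p.rep = 0}) :
    L₁ ⊆ Clebsch ∧ L₂ ⊆ Clebsch ∧ L₁ ∩ L₂ = ∅ := by
  subst hL₁ hL₂ hC
  refine ⟨?_, ?_, ?_⟩
  · rintro p ⟨a, b, h, rfl⟩
    exact clebschForm_zero_of_mk _ h (by simp [clebschForm_eq]; try ring) _ rfl
  · rintro p ⟨a, b, h, rfl⟩
    exact clebschForm_zero_of_mk _ h (by simp [clebschForm_eq]; try ring) _ rfl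
  · ext p
    simp only [Set.mem_inter_iff, Set.mem_setOf_eq, Set.mem_empty_iff_false, iff_false]
    rintro ⟨⟨a, b, h1, rfl⟩, a', b', h2, heq⟩
    rw [Projectivization.mk_eq_mk_iff] at heq
    obtain ⟨c, hc⟩ := heq
    have h0 := congrFun hc 0
    have h1' := congrFun hc 1
    have h3 := congrFun hc 3
    simp [Units.smul_def] at h0 h1' h3
    apply h1
    have ha : a = 0 := h0.symm
    have hb : b = 0 := by rw [← h3, h1', ha, neg_zero]
    funext i
    fin_cases i <;> simp [ha, hb]
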